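/- arXiv:2401.10027 — 9 statements merged into one kernel-verified Lean document; each statement's English description precedes it below -/
import Mathlib

section
/- Let y be a nonempty primitive modified ascent sequence (viewed as a pattern). Then for every n ≥ 1, the number of modified ascent sequences of length n avoiding y equals the sum over k = 1,…,n of binomial(n-1, k-1) times the number of primitive modified ascent sequences of length k avoiding y; that is, |Modasc_n(y)| = Σ_{k=1}^n C(n-1,k-1)·|Prim_k(y)|. -/
/-!
A word is determined by the set `s` of its non-flat steps together with the word `w` obtained by
deleting its flat steps: it equals `w ∘ g`, where `g` is the monotone surjection sending a position
to the number of steps of `s` before it. Composing with a monotone surjection changes neither the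
set of values nor, at the first position of each run, the ascent-top and leftmost-copy conditions,
and every other position is neither; so `w ∘ g` is a modified ascent sequence iff `w` is. It also
preserves containment of a pattern without flat steps, because an occurrence in `w ∘ g` cannot use
two positions of the same run. Hence `Modasc_n(y)` is in bijection with the pairs `(s, w)` where
`s ⊆ {1, …, n - 1}` and `w ∈ Prim_{|s|+1}(y)`, and counting the sets `s` by size gives the formula.
-/

/-- A Cayley permutation of length `n`: a word whose set of values is `{1, …, k}`
for some `k ≤ n`. -/
def IsCayley {n : ℕ} (x : Fin n → ℕ) : Prop :=
  ∃ k, k ≤ n ∧ Set.range x = Set.Icc 1 k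

/-- Ascent tops of `x`: indices `i` with `i = 0` or `x (i-1) < x i`. -/
def AscTops {n : ℕ} (x : Fin n → ℕ) : Set (Fin n) :=
  {i | ∀ j : Fin n, (j : ℕ) + 1 = (i : ℕ) → x j < x i}

/-- Leftmost copies of `x`: indices `i` such that the value `x i` does not occur earlier. -/
def Nub {n : ℕ} (x : Fin n → ℕ) : Set (Fin n) :=
  {i | ∀ j : Fin n, j < i → x j ≠ x i}

/-- A modified ascent sequence: a Cayley permutation whose ascent tops
are exactly its leftmost copies. -/
def IsModasc {n : ℕ} (x : Fin n → ℕ) : Prop :=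
  IsCayley x ∧ AscTops x = Nub x

/-- `x` has no flat steps (no two consecutive equal entries). -/
def NoFlat {n : ℕ} (x : Fin n → ℕ) : Prop :=
  ∀ i j : Fin n, (j : ℕ) = (i : ℕ) + 1 → x i ≠ x j

/-- A primitive modified ascent sequence. -/
def IsPrim {n : ℕ} (x : Fin n → ℕ) : Prop :=
  IsModasc x ∧ NoFlat x

/-- The word `x` contains the pattern `y`. -/
def Contains {n k : ℕ} (x : Fin n → ℕ) (y : Fin k → ℕ) : Prop :=
  ∃ f : Fin k → Fin n, StrictMono f ∧ ∀ s t, y s < y t ↔ x (f s) < x (f t)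

/-- The word `x` avoids the pattern `y`. -/
def Avoids {n k : ℕ} (x : Fin n → ℕ) (y : Fin k → ℕ) : Prop :=
  ¬ Contains x y

/-- Standardization: `(Std x) i = #{j : x j < x i} + #{j ≤ i : x j = x i}`. -/
def Std {n : ℕ} (x : Fin n → ℕ) : Fin n → ℕ :=
  fun i => (Finset.univ.filter fun j => x j < x i).card +
    (Finset.univ.filter fun j => j ≤ i ∧ x j = x i).card

/-- `p` is a permutation of `{1, …, n}` (written as a word). -/
def IsPerm {n : ℕ} (p : Fin n → ℕ) : Prop :=
  Function.Injective p ∧ Set.range p = Set.Icc 1 n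

/-- `p` contains the bivincular pattern `ω = (321, {1}, {1})`:
there are `i` and `j` with `i + 1 < j`, `p i > p (i+1)` and `p (i+1) = p j + 1`. -/
def ContainsOmega {n : ℕ} (p : Fin n → ℕ) : Prop :=
  ∃ (i j : Fin n) (hi : (i : ℕ) + 1 < n),
    (i : ℕ) + 1 < (j : ℕ) ∧ p ⟨(i : ℕ) + 1, hi⟩ < p i ∧ p ⟨(i : ℕ) + 1, hi⟩ = p j + 1

/-- Membership in `Ω_n`: a permutation of `{1, …, n}` whose first entry is `1`
and which avoids the bivincular pattern `ω`. -/
def InOmega {n : ℕ} (p : Fin n → ℕ) : Prop :=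
  IsPerm p ∧ (∀ h : 0 < n, p ⟨0, h⟩ = 1) ∧ ¬ ContainsOmega p

theorem isCayley_iff_exists_range_eq {n : ℕ} {x : Fin n → ℕ} :
    IsCayley x ↔ ∃ k, Set.range x = Set.Icc 1 k := by
  refine ⟨fun ⟨k, _, hk⟩ => ⟨k, hk⟩, fun ⟨k, hk⟩ => ⟨k, ?_, hk⟩⟩
  calc k = Nat.card (Set.Icc 1 k) := by simp
    _ = Nat.card (Set.range x) := by rw [hk]
    _ ≤ n := by simpa using Finite.card_range_le x

section MonotoneSurjection

variable {n k : ℕ} {g : Fin n → Fin k}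

theorem isCayley_comp_iff (hgs : Function.Surjective g) {w : Fin k → ℕ} :
    IsCayley (w ∘ g) ↔ IsCayley w := by
  simp only [isCayley_iff_exists_range_eq, hgs.range_comp]

theorem Monotone.val_le_add_one_of_surjective (hg : Monotone g) (hgs : Function.Surjective g)
    {i j : Fin n} (hji : (j : ℕ) + 1 = i) : (g i : ℕ) ≤ g j + 1 := by
  by_contra! h
  obtain ⟨p, hp⟩ := hgs ⟨g j + 1, by omega⟩
  have hp' : (g p : ℕ) = g j + 1 := congrArg Fin.val hp
  rcases le_or_gt p j with hpj | hjp
  · exact absurd (Fin.le_def.mp (hg hpj)) (by omega)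
  · have hip : i ≤ p := Fin.le_def.mpr (by rw [Fin.lt_def] at hjp; omega)
    exact absurd (Fin.le_def.mp (hg hip)) (by omega)

theorem Monotone.exists_pred_eq_of_eq (hg : Monotone g) {i j : Fin n} (hji : j < i)
    (h : g j = g i) : ∃ q : Fin n, (q : ℕ) + 1 = i ∧ g q = g i := by
  refine ⟨⟨i - 1, by omega⟩, by simp; omega, le_antisymm (hg ?_) (h.symm.trans_le (hg ?_))⟩
  all_goals simp only [Fin.le_def, Fin.lt_def] at hji ⊢; omega

theorem Monotone.exists_eq_and_forall_lt (hg : Monotone g) (hgs : Function.Surjective g)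
    (t : Fin k) : ∃ i, g i = t ∧ ∀ j < i, g j < g i := by
  obtain ⟨p, hp⟩ := hgs t
  obtain ⟨i, hi, hmin⟩ := (Finset.univ.filter (g · = t)).exists_min_image id ⟨p, by simp [hp]⟩
  simp only [Finset.mem_filter, Finset.mem_univ, true_and, id] at hi hmin
  exact ⟨i, hi, fun j hj => (hg hj.le).lt_of_ne fun h => (hmin j (h.trans hi)).not_gt hj⟩

theorem mem_nub_comp (hg : Monotone g) (hgs : Function.Surjective g) {w : Fin k → ℕ}
    {i : Fin n} : i ∈ Nub (w ∘ g) ↔ g i ∈ Nub w ∧ ∀ j < i, g j < g i := by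
  constructor
  · intro hi
    refine ⟨fun t ht => ?_, fun j hj => (hg hj.le).lt_of_ne fun h => hi j hj (congrArg w h)⟩
    obtain ⟨p, rfl⟩ := hgs t
    exact hi p (hg.reflect_lt ht)
  · rintro ⟨hgi, hrun⟩ j hj
    exact hgi (g j) (hrun j hj)

theorem mem_ascTops_comp (hg : Monotone g) (hgs : Function.Surjective g) {w : Fin k → ℕ}
    {i : Fin n} : i ∈ AscTops (w ∘ g) ↔ g i ∈ AscTops w ∧ ∀ j < i, g j < g i := by
  constructor
  · intro hi
    have hrun : ∀ j < i, g j < g i := fun j hj => (hg hj.le).lt_of_ne fun h => by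
      obtain ⟨q, hq, hqi⟩ := hg.exists_pred_eq_of_eq hj h
      exact (hi q hq).ne (congrArg w hqi)
    refine ⟨fun t ht => ?_, hrun⟩
    obtain ⟨p, rfl⟩ := hgs t
    have hpi := Fin.lt_def.mp (hg.reflect_lt (Fin.lt_def.mpr (by omega)) : p < i)
    obtain ⟨q, hq⟩ : ∃ q : Fin n, (q : ℕ) + 1 = i := ⟨⟨i - 1, by omega⟩, by simp; omega⟩
    have hpq := Fin.le_def.mp (hg (Fin.le_def.mpr (by omega)) : g p ≤ g q)
    have hqi := Fin.lt_def.mp (hrun q (Fin.lt_def.mpr (by omega)))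
    exact Fin.ext (show (g q : ℕ) = g p by omega) ▸ hi q hq
  · rintro ⟨hgi, hrun⟩ j hj
    have hlt := Fin.lt_def.mp (hrun j (Fin.lt_def.mpr (by omega)))
    have hle := hg.val_le_add_one_of_surjective hgs hj
    exact hgi (g j) (by omega)

theorem ascTops_comp_eq_nub_comp_iff (hg : Monotone g) (hgs : Function.Surjective g)
    {w : Fin k → ℕ} : AscTops (w ∘ g) = Nub (w ∘ g) ↔ AscTops w = Nub w := by
  constructor
  · intro h
    ext t
    obtain ⟨i, rfl, hrun⟩ := hg.exists_eq_and_forall_lt hgs t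
    simpa only [mem_ascTops_comp hg hgs, mem_nub_comp hg hgs, and_iff_left hrun] using
      Set.ext_iff.mp h i
  · intro h
    ext i
    rw [mem_ascTops_comp hg hgs, mem_nub_comp hg hgs, h]

theorem isModasc_comp_iff (hg : Monotone g) (hgs : Function.Surjective g) {w : Fin k → ℕ} :
    IsModasc (w ∘ g) ↔ IsModasc w :=
  and_congr (isCayley_comp_iff hgs) (ascTops_comp_eq_nub_comp_iff hg hgs)

theorem contains_comp_iff (hg : Monotone g) (hgs : Function.Surjective g) {w : Fin k → ℕ}
    {m : ℕ} {y : Fin m → ℕ} (hy : NoFlat y) : Contains (w ∘ g) y ↔ Contains w y := by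
  constructor
  · rintro ⟨f, hf, hiff⟩
    refine ⟨g ∘ f, fun u v huv => (hg (hf huv).le).lt_of_ne fun h => ?_, hiff⟩
    obtain ⟨u', hu'⟩ : ∃ u' : Fin m, (u' : ℕ) = u + 1 := ⟨⟨u + 1, by omega⟩, rfl⟩
    have hle : g (f u) ≤ g (f u') := hg (hf (by rw [Fin.lt_def]; omega)).le
    have hge : g (f u') ≤ g (f v) := hg (hf.monotone (by rw [Fin.le_def]; omega))
    have heq : w (g (f u)) = w (g (f u')) := congrArg w (le_antisymm hle (h ▸ hge))
    have h1 : ¬ y u < y u' := fun hlt => ((hiff u u').mp hlt).ne heq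
    have h2 : ¬ y u' < y u := fun hlt => ((hiff u' u).mp hlt).ne' heq
    exact hy u u' hu' (le_antisymm (not_lt.mp h2) (not_lt.mp h1))
  · rintro ⟨f, hf, hiff⟩
    refine ⟨Function.surjInv hgs ∘ f, fun u v huv => hg.reflect_lt ?_, fun s t => ?_⟩ <;>
      simp only [Function.comp_apply, Function.surjInv_eq hgs]
    · exact hf huv
    · exact hiff s t

end MonotoneSurjection

theorem exists_castSucc_eq_and_succ_eq {N : ℕ} {f : Fin (N + 1) → ℕ}
    (hf : ∀ j : Fin N, f j.succ ≤ f j.castSucc + 1) (i : Fin (N + 1)) {t : ℕ} (h0 : f 0 ≤ t)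
    (hi : t < f i) : ∃ j : Fin N, f j.castSucc = t ∧ f j.succ = t + 1 := by
  induction i using Fin.induction with
  | zero => omega
  | succ j ih =>
    by_cases ht : t < f j.castSucc
    · exact ih ht
    · have := hf j
      exact ⟨j, by omega, by omega⟩

section Runs

variable {N : ℕ}

open Finset

def nonflatSteps (x : Fin (N + 1) → ℕ) : Finset (Fin N) :=
  {j | x j.castSucc ≠ x j.succ}

def runIndex (s : Finset (Fin N)) (i : Fin (N + 1)) : Fin (#s + 1) :=
  ⟨#{j ∈ s | j.castSucc < i}, Nat.lt_succ_of_le (card_filter_le _ _)⟩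

variable (s : Finset (Fin N))

theorem runIndex_monotone : Monotone (runIndex s) := fun _ _ h =>
  card_le_card (monotone_filter_right s fun _ _ hj => hj.trans_le h)

theorem runIndex_zero : runIndex s 0 = 0 := by
  simp [runIndex]

theorem val_runIndex_last : (runIndex s (Fin.last N) : ℕ) = #s := by
  simp [runIndex, Fin.castSucc_lt_last]

theorem val_runIndex_succ (j : Fin N) :
    (runIndex s j.succ : ℕ) = runIndex s j.castSucc + if j ∈ s then 1 else 0 := by
  simp only [runIndex, Fin.castSucc_lt_succ_iff, Fin.castSucc_lt_castSucc_iff, le_iff_lt_or_eq,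
    filter_or]
  rw [card_union_of_disjoint (disjoint_filter.mpr fun _ _ h1 h2 => h1.ne h2), filter_eq']
  split_ifs <;> simp

theorem val_runIndex_succ_le (j : Fin N) :
    (runIndex s j.succ : ℕ) ≤ runIndex s j.castSucc + 1 := by
  rw [val_runIndex_succ]
  split_ifs <;> omega

theorem mem_iff_runIndex_ne {j : Fin N} :
    j ∈ s ↔ runIndex s j.castSucc ≠ runIndex s j.succ := by
  rw [Ne, Fin.ext_iff, val_runIndex_succ]
  split_ifs <;> simp_all

theorem exists_runIndex_castSucc_eq {t : ℕ} (ht : t < #s) :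
    ∃ j : Fin N, (runIndex s j.castSucc : ℕ) = t ∧ (runIndex s j.succ : ℕ) = t + 1 :=
  exists_castSucc_eq_and_succ_eq (f := fun i => (runIndex s i : ℕ)) (val_runIndex_succ_le s)
    (Fin.last N) (by simp [runIndex_zero]) (by rwa [val_runIndex_last])

theorem runIndex_surjective : Function.Surjective (runIndex s) := by
  intro t
  rcases (Nat.lt_succ_iff.mp t.isLt).lt_or_eq with ht | ht
  · obtain ⟨j, hj, -⟩ := exists_runIndex_castSucc_eq s ht
    exact ⟨j.castSucc, Fin.ext hj⟩
  · exact ⟨Fin.last N, Fin.ext (by rw [val_runIndex_last, ht])⟩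

theorem nonflatSteps_comp_runIndex {w : Fin (#s + 1) → ℕ} (hw : NoFlat w) :
    nonflatSteps (w ∘ runIndex s) = s := by
  ext j
  simp only [nonflatSteps, mem_filter, mem_univ, true_and, Function.comp_apply]
  by_cases hj : j ∈ s
  · simpa [hj] using hw _ _ (by rw [val_runIndex_succ, if_pos hj])
  · simp [hj, not_not.mp ((mem_iff_runIndex_ne s).not.mp hj)]

variable {s}

theorem apply_eq_of_runIndex_eq {x : Fin (N + 1) → ℕ} (hs : nonflatSteps x ⊆ s)
    {i i' : Fin (N + 1)} (h : runIndex s i = runIndex s i') : x i = x i' := by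
  wlog hii : i ≤ i' generalizing i i'
  · exact (this h.symm (le_of_not_ge hii)).symm
  induction i' using Fin.induction with
  | zero => rw [Fin.le_zero_iff.mp hii]
  | succ j ih =>
    rcases hii.lt_or_eq with hlt | rfl
    · have hij : i ≤ j.castSucc := Fin.le_castSucc_iff.mpr hlt
      have hj : runIndex s j.castSucc = runIndex s j.succ :=
        le_antisymm (runIndex_monotone s (Fin.castSucc_le_succ j)) (h ▸ runIndex_monotone s hij)
      have hflat : x j.castSucc = x j.succ := by
        by_contra hne
        exact (mem_iff_runIndex_ne s).mp (hs (by simp [nonflatSteps, hne])) hj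
      rw [ih (h.trans hj.symm) hij, hflat]
    · rfl

noncomputable def destutter (x : Fin (N + 1) → ℕ) : Fin (#(nonflatSteps x) + 1) → ℕ :=
  x ∘ Function.surjInv (runIndex_surjective _)

theorem destutter_comp_runIndex (x : Fin (N + 1) → ℕ) :
    destutter x ∘ runIndex (nonflatSteps x) = x :=
  funext fun _ => apply_eq_of_runIndex_eq subset_rfl (Function.surjInv_eq _ _)

theorem noFlat_destutter (x : Fin (N + 1) → ℕ) : NoFlat (destutter x) := by
  intro t t' ht'
  obtain ⟨j, hj, hj'⟩ := exists_runIndex_castSucc_eq (nonflatSteps x) (t := t) (by omega)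
  have hjs : j ∈ nonflatSteps x := (mem_iff_runIndex_ne _).mpr (by rw [Ne, Fin.ext_iff]; omega)
  have hxt : destutter x t = x j.castSucc :=
    (Fin.ext hj : runIndex _ j.castSucc = t) ▸ congrFun (destutter_comp_runIndex x) j.castSucc
  have hxt' : destutter x t' = x j.succ :=
    (Fin.ext (hj'.trans ht'.symm) : runIndex _ j.succ = t') ▸
      congrFun (destutter_comp_runIndex x) j.succ
  simpa [nonflatSteps, hxt, hxt'] using hjs

end Runs

theorem finite_setOf_isCayley (k : ℕ) : {w : Fin k → ℕ | IsCayley w}.Finite :=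
  (Set.finite_Iic fun _ => k).subset fun _ ⟨_, hc, hr⟩ i =>
    ((hr.subset (Set.mem_range_self i)).2).trans hc

section Inflation

open Finset

variable {m : ℕ} (y : Fin m → ℕ)

abbrev ModascAvoiding (n : ℕ) : Type := {x : Fin n → ℕ // IsModasc x ∧ Avoids x y}

abbrev PrimAvoiding (k : ℕ) : Type := {w : Fin k → ℕ // IsPrim w ∧ Avoids w y}

instance (k : ℕ) : Finite (PrimAvoiding y k) :=
  ((finite_setOf_isCayley k).subset fun _ hw => hw.1.1.1).to_subtype

variable {y}

def inflate (hy : NoFlat y) {N : ℕ} (p : Σ s : Finset (Fin N), PrimAvoiding y (#s + 1)) :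
    ModascAvoiding y (N + 1) :=
  ⟨p.2.1 ∘ runIndex p.1,
    (isModasc_comp_iff (runIndex_monotone _) (runIndex_surjective _)).mpr p.2.2.1.1,
    (contains_comp_iff (runIndex_monotone _) (runIndex_surjective _) hy).not.mpr p.2.2.2⟩

theorem inflate_bijective (hy : NoFlat y) (N : ℕ) : Function.Bijective (inflate hy (N := N)) := by
  constructor
  · rintro ⟨s, w, hw⟩ ⟨s', w', hw'⟩ h
    have hx : w ∘ runIndex s = w' ∘ runIndex s' := congrArg Subtype.val h
    obtain rfl : s = s' := by
      rw [← nonflatSteps_comp_runIndex s hw.1.2, ← nonflatSteps_comp_runIndex s' hw'.1.2, hx]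
    obtain rfl : w = w' := (runIndex_surjective s).injective_comp_right hx
    rfl
  · rintro ⟨x, hx, hxy⟩
    have hfac := destutter_comp_runIndex x
    refine ⟨⟨nonflatSteps x, destutter x, ⟨?_, noFlat_destutter x⟩, ?_⟩, Subtype.ext hfac⟩
    · rwa [← isModasc_comp_iff (runIndex_monotone _) (runIndex_surjective _), hfac]
    · rwa [Avoids, ← contains_comp_iff (runIndex_monotone _) (runIndex_surjective _) hy, hfac]

theorem card_modascAvoiding_succ (hy : NoFlat y) (N : ℕ) :
    Nat.card (ModascAvoiding y (N + 1)) =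
      ∑ j ∈ range (N + 1), N.choose j * Nat.card (PrimAvoiding y (j + 1)) := by
  rw [← Nat.card_eq_of_bijective _ (inflate_bijective hy N), Nat.card_sigma, ← powerset_univ,
    sum_powerset_apply_card (fun j => Nat.card (PrimAvoiding y (j + 1))), card_fin]
  rfl

end Inflation

theorem prim_to_full_general {m : ℕ} (y : Fin m → ℕ) (hy : IsPrim y) :
    ∀ n : ℕ, 1 ≤ n →
      Nat.card {x : Fin n → ℕ // IsModasc x ∧ Avoids x y} =
        ∑ k ∈ Finset.Icc 1 n, Nat.choose (n - 1) (k - 1) *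
          Nat.card {w : Fin k → ℕ // IsPrim w ∧ Avoids w y} := by
  intro n hn
  obtain ⟨N, rfl⟩ := Nat.exists_eq_add_of_le' hn
  rw [card_modascAvoiding_succ hy.2, ← Finset.Ico_add_one_right_eq_Icc,
    Finset.sum_Ico_eq_sum_range]
  refine Finset.sum_congr (by simp) fun j _ => ?_
  rw [add_comm 1 j, Nat.add_sub_cancel, Nat.add_sub_cancel]

/-- For a nonempty primitive modified ascent sequence pattern `y`,
`|Modasc_n(y)| = Σ_{k=1}^n C(n-1,k-1) · |Prim_k(y)|` for all `n ≥ 1`. -/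
theorem prim_to_full {m : ℕ} (y : Fin m → ℕ) (hm : 1 ≤ m) (hy : IsPrim y) :
    ∀ n : ℕ, 1 ≤ n →
      Nat.card {x : Fin n → ℕ // IsModasc x ∧ Avoids x y} =
        ∑ k ∈ Finset.Icc 1 n, Nat.choose (n - 1) (k - 1) *
          Nat.card {w : Fin k → ℕ // IsPrim w ∧ Avoids w y} :=
  prim_to_full_general y hy
end

section
/- Let x = x_1⋯x_n be a primitive modified ascent sequence. Then: (i) every weak left-to-right maximum of x is a (strict) left-to-right maximum, i.e. if x_j ≤ x_i for all j < i then x_j < x_i for all j < i; (ii) every weak right-to-left maximum of x is a (strict) right-to-left maximum, i.e. if x_j ≤ x_i for all j > i then x_j < x_i for all j > i; (iii) the only left-to-right minimum of x is its first entry, i.e. the set of indices i such that x_j > x_i for all j < i equals {1}. -/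
/-!
A repeated value is not a leftmost copy, so it is not an ascent top, and without flat steps
its predecessor is strictly larger. A tie in a weak left-to-right (right-to-left) maximum would
be such a repeat, whose larger predecessor contradicts maximality. Conversely a left-to-right
minimum is a leftmost copy, hence an ascent top, so it can only be the first entry.
-/

section

variable {n : ℕ} {x : Fin n → ℕ}

theorem exists_pred_gt_of_repeat (hA : AscTops x ⊆ Nub x) (hF : NoFlat x) {i j : Fin n}
    (hji : j < i) (heq : x j = x i) : ∃ k : Fin n, (k : ℕ) + 1 = i ∧ x i < x k := by
  have hi : i ∉ AscTops x := fun h => hA h j hji heq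
  simp only [AscTops, Set.mem_ofPred_eq, not_forall, not_lt] at hi
  obtain ⟨k, hk, hle⟩ := hi
  exact ⟨k, hk, lt_of_le_of_ne hle (hF k i hk.symm).symm⟩

theorem lt_of_weak_ltr_max (hA : AscTops x ⊆ Nub x) (hF : NoFlat x) {i : Fin n}
    (hmax : ∀ j < i, x j ≤ x i) {j : Fin n} (hj : j < i) : x j < x i := by
  refine lt_of_le_of_ne (hmax j hj) fun heq => ?_
  obtain ⟨k, hk, hlt⟩ := exists_pred_gt_of_repeat hA hF hj heq
  exact (hmax k (Fin.lt_def.2 (by omega))).not_gt hlt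

theorem lt_of_weak_rtl_max (hA : AscTops x ⊆ Nub x) (hF : NoFlat x) {i : Fin n}
    (hmax : ∀ j, i < j → x j ≤ x i) {j : Fin n} (hj : i < j) : x j < x i := by
  refine lt_of_le_of_ne (hmax j hj) fun heq => ?_
  obtain ⟨k, hk, hlt⟩ := exists_pred_gt_of_repeat hA hF hj heq.symm
  rcases (show i ≤ k from Fin.le_def.2 (by rw [Fin.lt_def] at hj; omega)).lt_or_eq with hik | rfl
  · exact (hmax k hik).not_gt (heq ▸ hlt)
  · exact hlt.ne heq

theorem val_eq_zero_of_ltr_min (hN : Nub x ⊆ AscTops x) {i : Fin n}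
    (hmin : ∀ j < i, x i < x j) : (i : ℕ) = 0 := by
  by_contra h0
  let k : Fin n := ⟨i - 1, by omega⟩
  have hk : (k : ℕ) + 1 = i := by simp only [k]; omega
  have hasc : x k < x i := hN (fun j hj => (hmin j hj).ne') k hk
  exact (hmin k (Fin.lt_def.2 (by omega))).not_gt hasc

end

/-- In a primitive modified ascent sequence, weak left-to-right maxima
are strict, weak right-to-left maxima are strict, and the only left-to-right
minimum is the first entry. -/
theorem prim_stats {n : ℕ} (x : Fin n → ℕ) (hx : IsPrim x) :
    (∀ i : Fin n, (∀ j < i, x j ≤ x i) → (∀ j < i, x j < x i)) ∧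
    (∀ i : Fin n, (∀ j, i < j → x j ≤ x i) → (∀ j, i < j → x j < x i)) ∧
    {i : Fin n | ∀ j < i, x i < x j} = {i : Fin n | (i : ℕ) = 0} := by
  obtain ⟨⟨-, hAN⟩, hF⟩ := hx
  refine ⟨fun i hmax j hj => lt_of_weak_ltr_max hAN.subset hF hmax hj,
    fun i hmax j hj => lt_of_weak_rtl_max hAN.subset hF hmax hj, ?_⟩
  ext i
  refine ⟨val_eq_zero_of_ltr_min hAN.symm.subset, fun h0 j hj => ?_⟩
  rw [Fin.lt_def, h0] at hj
  omega
end

section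
/- Let x = x_1⋯x_n be a Cayley permutation and let p = st(x) be its standardization. If i < j are indices with p_i = p_j + 1, then x_i is a leftmost copy in x, i.e. x_m ≠ x_i for all m < i. -/
section Std

open Finset

variable {n : ℕ} {x : Fin n → ℕ}

lemma card_lt_lt_std (b : Fin n) : #{t | x t < x b} < Std x b :=
  Nat.lt_add_of_pos_right (card_pos.mpr ⟨b, by simp⟩)

lemma std_le_card_lt {a b : Fin n} (hab : x a < x b) : Std x a ≤ #{t | x t < x b} := by
  rw [Std, ← card_union_of_disjoint]
  · exact card_le_card fun t ht => by
      simp only [mem_union, mem_filter, mem_univ, true_and] at ht ⊢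
      omega
  · exact disjoint_filter.mpr fun t _ hlt heq => hlt.ne heq.2

lemma std_lt_std_of_lt {a b : Fin n} (hab : x a < x b) : Std x a < Std x b :=
  (std_le_card_lt hab).trans_lt (card_lt_lt_std b)

lemma std_lt_std_of_eq {a b : Fin n} (hab : a < b) (he : x a = x b) : Std x a < Std x b := by
  have hsub : ({t | t ≤ a ∧ x t = x b} : Finset (Fin n)) ⊂ ({t | t ≤ b ∧ x t = x b} : Finset _) :=
    (ssubset_iff_of_subset fun t ht => by
      simp only [mem_filter, mem_univ, true_and] at ht ⊢
      exact ⟨ht.1.trans hab.le, ht.2⟩).mpr ⟨b, by simp, by simp [hab.not_ge]⟩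
  simp only [Std, he]
  exact Nat.add_lt_add_left (card_lt_card hsub) _

lemma lt_of_std_lt_std {a b : Fin n} (hab : a < b) (h : Std x b < Std x a) : x b < x a := by
  rcases lt_trichotomy (x a) (x b) with hlt | heq | hgt
  · exact absurd h (std_lt_std_of_lt hlt).asymm
  · exact absurd h (std_lt_std_of_eq hab heq).asymm
  · exact hgt

lemma card_lt_add_two_le_std {m i : Fin n} (hm : m < i) (he : x m = x i) :
    #{t | x t < x i} + 2 ≤ Std x i := by
  have hpair : ({m, i} : Finset (Fin n)) ⊆ ({t | t ≤ i ∧ x t = x i} : Finset (Fin n)) := by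
    simp [insert_subset_iff, hm.le, he]
  have := card_le_card hpair
  rw [card_pair hm.ne] at this
  exact Nat.add_le_add_left this _

end Std

theorem std_nub_general {n : ℕ} (x : Fin n → ℕ) (i j : Fin n)
    (hij : i < j) (h : Std x i = Std x j + 1) :
    ∀ m < i, x m ≠ x i := by
  intro m hm he
  have hji : x j < x i := lt_of_std_lt_std hij (by omega)
  have hj := std_le_card_lt hji
  have hi := card_lt_add_two_le_std hm he
  omega

/-- If `i < j` and `(st x) i = (st x) j + 1`, then `x i` is a leftmost
copy in `x`. -/
theorem std_nub {n : ℕ} (x : Fin n → ℕ) (hx : IsCayley x) (i j : Fin n)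
    (hij : i < j) (h : Std x i = Std x j + 1) :
    ∀ m < i, x m ≠ x i :=
  std_nub_general x i j hij h
end

section
/- If x is a modified ascent sequence of length n, then its standardization st(x) belongs to Ω_n; that is, st(x) has first entry 1 and avoids the bivincular pattern ω. -/
open Finset

section RankBy

variable {α β : Type*} [Fintype α] [LinearOrder β] (f : α → β)

def rankBy (i : α) : ℕ := #{j | f j ≤ f i}

variable {f}

lemma rankBy_le_rankBy {a b : α} (h : f a ≤ f b) : rankBy f a ≤ rankBy f b :=
  card_le_card <| monotone_filter_right _ fun _ _ hj => hj.trans h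

lemma rankBy_lt_rankBy {a b : α} (h : f a < f b) : rankBy f a < rankBy f b := by
  refine card_lt_card <| (ssubset_iff_of_subset ?_).2 ⟨b, ?_, ?_⟩
  · exact monotone_filter_right _ fun _ _ hj => hj.trans h.le
  · simp
  · simpa using h

lemma rankBy_lt_rankBy_iff {a b : α} : rankBy f a < rankBy f b ↔ f a < f b :=
  ⟨fun h => lt_of_not_ge fun h' => h.not_ge (rankBy_le_rankBy h'), rankBy_lt_rankBy⟩

lemma rankBy_injective (hf : Function.Injective f) : Function.Injective (rankBy f) := by
  intro a b h
  refine hf (le_antisymm ?_ ?_) <;>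
    exact le_of_not_gt fun h' => (rankBy_lt_rankBy h').ne (by simp [h])

lemma rankBy_mem_Icc (i : α) : rankBy f i ∈ Set.Icc 1 (Fintype.card α) :=
  ⟨card_pos.2 ⟨i, by simp⟩, card_le_univ _⟩

lemma range_rankBy (hf : Function.Injective f) :
    Set.range (rankBy f) = Set.Icc 1 (Fintype.card α) := by
  classical
  have hsub : univ.image (rankBy f) ⊆ Icc 1 (Fintype.card α) := by
    simpa [subset_iff] using rankBy_mem_Icc (f := f)
  have hcard : #(Icc 1 (Fintype.card α)) ≤ #(univ.image (rankBy f)) := by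
    simp [card_image_of_injective _ (rankBy_injective hf)]
  simpa using congrArg ((↑) : Finset ℕ → Set ℕ) (eq_of_subset_of_card_le hsub hcard)

lemma rankBy_eq_one {i : α} (hf : Function.Injective f) (hi : ∀ j, f i ≤ f j) :
    rankBy f i = 1 := by
  rw [rankBy, card_eq_one]
  exact ⟨i, by ext j; simpa using ⟨fun hj => hf (le_antisymm hj (hi j)), fun h => h ▸ le_rfl⟩⟩

end RankBy

section Standardization

variable {n : ℕ} (x : Fin n → ℕ)

def stdKey (i : Fin n) : ℕ ×ₗ Fin n := toLex (x i, i)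

lemma stdKey_injective : Function.Injective (stdKey x) :=
  fun _ _ h => (Prod.ext_iff.1 (toLex.injective h)).2

lemma std_eq_rankBy : Std x = rankBy (stdKey x) := by
  funext i
  rw [Std, ← card_union_of_disjoint (disjoint_filter.2 fun j _ h h' => h.ne h'.2), ← filter_or]
  congr 1
  ext j
  simp [stdKey, Prod.Lex.toLex_le_toLex, and_comm]

lemma isPerm_std : IsPerm (Std x) := by
  rw [std_eq_rankBy]
  exact ⟨rankBy_injective (stdKey_injective x), by
    simpa using range_rankBy (stdKey_injective x)⟩

variable {x}

lemma std_lt_std_iff {a b : Fin n} : Std x a < Std x b ↔ x a < x b ∨ x a = x b ∧ a < b := by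
  rw [std_eq_rankBy, rankBy_lt_rankBy_iff, stdKey, stdKey, Prod.Lex.toLex_lt_toLex]

lemma lt_of_std_lt_std_of_lt {a b : Fin n} (h : Std x a < Std x b) (hba : b < a) :
    x a < x b :=
  (std_lt_std_iff.1 h).resolve_right fun h' => h'.2.asymm hba

end Standardization

section AscentTops

variable {n : ℕ} {x : Fin n → ℕ}

lemma exists_lt_eq_of_notMem_ascTops (h : Nub x ⊆ AscTops x) {a : Fin n}
    (ha : a ∉ AscTops x) : ∃ m < a, x m = x a := by
  by_contra! hm
  exact ha (h hm)

lemma std_zero_eq_one (h : Nub x ⊆ AscTops x) (hn : 0 < n) : Std x ⟨0, hn⟩ = 1 := by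
  have : Nonempty (Fin n) := ⟨⟨0, hn⟩⟩
  obtain ⟨m, hm⟩ := Finite.exists_min (stdKey x)
  have hnub : m ∈ Nub x := fun j hjm hj =>
    (hm j).not_gt (Prod.Lex.toLex_lt_toLex.2 (Or.inr ⟨hj, hjm⟩))
  have hm0 : m = ⟨0, hn⟩ := by
    by_contra hne
    have hpos : 0 < (m : ℕ) := Nat.pos_of_ne_zero fun h0 => hne (Fin.ext h0)
    have hasc := h hnub ⟨m - 1, by omega⟩ (by simp only; omega)
    exact (hm _).not_gt (Prod.Lex.toLex_lt_toLex.2 (Or.inl hasc))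
  rw [std_eq_rankBy, ← hm0, rankBy_eq_one (stdKey_injective x) hm]

lemma not_containsOmega_std (h : Nub x ⊆ AscTops x) : ¬ ContainsOmega (Std x) := by
  rintro ⟨i, j, hi, hij, hdesc, hadj⟩
  set a : Fin n := ⟨i + 1, hi⟩
  have hia : i < a := Fin.lt_def.2 (Nat.lt_succ_self _)
  have haj : a < j := Fin.lt_def.2 hij
  have hxa : x a < x i := lt_of_std_lt_std_of_lt hdesc hia
  obtain ⟨m, hma, hxm⟩ := exists_lt_eq_of_notMem_ascTops h fun ha => (ha i rfl).asymm hxa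
  have hjm : Std x j < Std x m :=
    std_lt_std_iff.2 (Or.inl (hxm ▸ lt_of_std_lt_std_of_lt (by omega) haj))
  have hma' : Std x m < Std x a := std_lt_std_iff.2 (Or.inr ⟨hxm, hma⟩)
  omega

end AscentTops

/-- The standardization of a modified ascent sequence lies in `Ω_n`. -/
theorem std_modasc_mem_Omega {n : ℕ} (x : Fin n → ℕ) (hx : IsModasc x) :
    InOmega (Std x) :=
  ⟨isPerm_std x, std_zero_eq_one hx.2.ge, not_containsOmega_std hx.2.ge⟩
end

section
/- Let p = p_1⋯p_n be a permutation in Ω_n. If i is an index with i ≥ 2 and p_{i-1} > p_i (so that p_i is not an ascent top), and j is the index with p_j = p_i − 1, then j < i. -/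
theorem le_of_not_containsOmega {n : ℕ} {p : Fin n → ℕ} (hω : ¬ ContainsOmega p) {i i' j : Fin n}
    (hi' : (i' : ℕ) + 1 = (i : ℕ)) (hdes : p i < p i') (hj : p j + 1 = p i) : j ≤ i := by
  have hsucc : (⟨(i' : ℕ) + 1, hi' ▸ i.isLt⟩ : Fin n) = i := Fin.ext hi'
  by_contra hij
  exact hω ⟨i', j, hi' ▸ i.isLt, by omega, by rwa [hsucc], by rw [hsucc, hj]⟩

/-- In `p ∈ Ω_n`, if `p i` is not an ascent top (its predecessor entry
`p i'` with `i' + 1 = i` satisfies `p i' > p i`) and `p j = p i - 1`, then `j < i`. -/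
theorem omega_chains {n : ℕ} (p : Fin n → ℕ) (hp : InOmega p) (i i' : Fin n)
    (hi' : (i' : ℕ) + 1 = (i : ℕ)) (hdes : p i < p i') (j : Fin n)
    (hj : p j + 1 = p i) :
    j < i := by
  have hne : j ≠ i := by
    rintro rfl
    omega
  exact lt_of_le_of_ne (le_of_not_containsOmega hp.2.2 hi' hdes hj) hne
end

section
/- For every permutation p in Ω_n, there exists a primitive modified ascent sequence x of length n such that st(x) = p. In other words, Ω_n ⊆ st(Prim_n). -/
/-!
Call `v` a descent bottom of `p` if `v = p (i+1) < p i` for some `i`. Cut the values `1, …, n`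
into maximal intervals all of whose elements except the least are descent bottoms, and let
`x i` be the number of the interval containing `p i`. Avoiding `ω` says exactly that a descent
bottom `v` stands to the right of `v - 1`, so inside an interval the values occur from left to
right in increasing order. Hence `st x = p`, the first occurrence of a letter of `x` is the least
value of its interval, i.e. a value that is not a descent bottom, i.e. an ascent top of `p` and of
`x`, and two adjacent entries never lie in the same interval.
-/
open Finset

variable {n : ℕ}

def IsDescentBottom (p : Fin n → ℕ) (v : ℕ) : Prop :=
  ∃ i j : Fin n, (j : ℕ) + 1 = i ∧ p i = v ∧ v < p j

instance (p : Fin n → ℕ) : DecidablePred (IsDescentBottom p) := fun _ => by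
  unfold IsDescentBottom; infer_instance

/-- `blockIndex p v` counts the values `u ∈ [1, v]` that are not descent bottoms: it is the
number of the interval containing `v`. -/
def blockIndex (p : Fin n → ℕ) : ℕ → ℕ :=
  Nat.count fun u => ¬ IsDescentBottom p (u + 1)

lemma exists_le_apply_eq_of_le_succ {f : ℕ → ℕ} (hf : ∀ v, f (v + 1) ≤ f v + 1) {m : ℕ}
    (h0 : f 0 ≤ m) : ∀ {N}, m ≤ f N → ∃ v ≤ N, f v = m
  | 0, hm => ⟨0, le_rfl, by omega⟩
  | N + 1, hm => by
    rcases eq_or_lt_of_le hm with rfl | hlt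
    · exact ⟨N + 1, le_rfl, rfl⟩
    · obtain ⟨v, hv, hfv⟩ := exists_le_apply_eq_of_le_succ hf h0 (N := N) (by have := hf N; omega)
      exact ⟨v, by omega, hfv⟩

section blockIndex

variable (p : Fin n → ℕ)

lemma blockIndex_zero : blockIndex p 0 = 0 := Nat.count_zero _

lemma blockIndex_mono : Monotone (blockIndex p) := Nat.count_monotone _

lemma blockIndex_le (v : ℕ) : blockIndex p v ≤ v := Nat.count_le _

lemma blockIndex_succ_le (v : ℕ) : blockIndex p (v + 1) ≤ blockIndex p v + 1 := by
  rw [blockIndex, Nat.count_succ]; split_ifs <;> omega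

variable {p}

lemma blockIndex_lt_of_not_isDescentBottom {u v : ℕ} (huv : u < v)
    (hv : ¬ IsDescentBottom p v) : blockIndex p u < blockIndex p v := by
  obtain ⟨w, rfl⟩ : ∃ w, v = w + 1 := ⟨v - 1, by omega⟩
  exact (blockIndex_mono p (Nat.le_of_lt_succ huv)).trans_lt
    (Nat.count_lt_count_succ_iff.mpr hv)

lemma blockIndex_succ_of_isDescentBottom {v : ℕ} (hv : IsDescentBottom p (v + 1)) :
    blockIndex p (v + 1) = blockIndex p v :=
  Nat.count_succ_eq_count_iff.mpr (not_not.mpr hv)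

lemma isDescentBottom_apply_iff (hinj : Function.Injective p) (i : Fin n) :
    IsDescentBottom p (p i) ↔ ∃ j : Fin n, (j : ℕ) + 1 = i ∧ p i < p j := by
  constructor
  · rintro ⟨i', j, hji, hi', hlt⟩
    exact ⟨j, hinj hi' ▸ hji, hlt⟩
  · rintro ⟨j, hji, hlt⟩
    exact ⟨i, j, hji, rfl, hlt⟩

lemma blockIndex_lt_blockIndex_iff_of_succ (hinj : Function.Injective p) {i j : Fin n}
    (hji : (j : ℕ) + 1 = i) : blockIndex p (p j) < blockIndex p (p i) ↔ p j < p i := by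
  refine ⟨(blockIndex_mono p).reflect_lt, fun hlt => blockIndex_lt_of_not_isDescentBottom hlt ?_⟩
  rw [isDescentBottom_apply_iff hinj]
  rintro ⟨j', hj'i, hlt'⟩
  obtain rfl : j' = j := Fin.ext (by omega)
  omega

lemma mem_ascTops_iff (hinj : Function.Injective p) (i : Fin n) :
    i ∈ AscTops (blockIndex p ∘ p) ↔ ¬ IsDescentBottom p (p i) := by
  rw [isDescentBottom_apply_iff hinj, not_exists]
  refine forall_congr' fun j => ⟨fun h hj => ?_, fun h hj => ?_⟩
  · exact lt_asymm ((blockIndex_lt_blockIndex_iff_of_succ hinj hj.1).mp (h hj.1)) hj.2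
  · have hne : p j ≠ p i := fun he => by have := congrArg Fin.val (hinj he); omega
    exact (blockIndex_lt_blockIndex_iff_of_succ hinj hj).mpr
      (lt_of_le_of_ne (not_lt.mp fun hlt => h ⟨hj, hlt⟩) hne)

end blockIndex

namespace IsPerm

variable {p : Fin n → ℕ}

lemma mem_Icc (hp : IsPerm p) (i : Fin n) : p i ∈ Set.Icc 1 n :=
  hp.2 ▸ Set.mem_range_self i

lemma exists_apply_eq (hp : IsPerm p) {v : ℕ} (h1 : 1 ≤ v) (h2 : v ≤ n) : ∃ i, p i = v :=
  (Set.ext_iff.mp hp.2 v).mpr ⟨h1, h2⟩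

lemma card_filter_apply_le (hp : IsPerm p) (i : Fin n) : #{j | p j ≤ p i} = p i := by
  refine (card_nbij p (fun j hj => ?_) hp.1.injOn fun v hv => ?_).trans (Nat.card_Icc 1 (p i))
  · simpa [(hp.mem_Icc j).1] using hj
  · simp only [coe_Icc, Set.mem_Icc] at hv
    obtain ⟨j, rfl⟩ := hp.exists_apply_eq hv.1 (hv.2.trans (hp.mem_Icc i).2)
    exact ⟨j, by simpa using hv.2, rfl⟩

lemma std_eq {x : Fin n → ℕ} (hp : IsPerm p)
    (hle : ∀ i j, p j ≤ p i ↔ x j < x i ∨ (j ≤ i ∧ x j = x i)) : Std x = p := by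
  funext i
  rw [Std, ← card_union_of_disjoint, ← filter_or, ← hp.card_filter_apply_le i]
  · exact congrArg card (filter_congr fun j _ => (hle i j).symm)
  · exact disjoint_filter.mpr fun j _ h1 h2 => h1.ne h2.2

end IsPerm

namespace InOmega

variable {p : Fin n → ℕ}

lemma not_isDescentBottom_one (hp : InOmega p) : ¬ IsDescentBottom p 1 := by
  rintro ⟨i, j, hji, hi, -⟩
  have h0 : i = ⟨0, by omega⟩ := hp.1.1 (by rw [hi, hp.2.1])
  rw [h0] at hji
  simp at hji

lemma blockIndex_one (hp : InOmega p) : blockIndex p 1 = 1 := by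
  simp [blockIndex, Nat.count_one, hp.not_isDescentBottom_one]

lemma lt_of_isDescentBottom (hp : InOmega p) {i k : Fin n} (hv : IsDescentBottom p (p i))
    (hk : p k + 1 = p i) : k < i := by
  obtain ⟨j, hji, hlt⟩ := (isDescentBottom_apply_iff hp.1.1 i).mp hv
  by_contra! hik
  have hne : i ≠ k := fun h => by rw [h] at hk; omega
  have hsucc : (⟨(j : ℕ) + 1, by omega⟩ : Fin n) = i := Fin.ext hji
  exact hp.2.2 ⟨j, k, by omega, by have := Fin.lt_def.mp (lt_of_le_of_ne hik hne); omega,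
    by rw [hsucc]; exact hlt, by rw [hsucc, hk]⟩

lemma lt_of_blockIndex_eq (hp : InOmega p) {i j : Fin n} (hlt : p i < p j)
    (h : blockIndex p (p i) = blockIndex p (p j)) : i < j := by
  generalize hj : p j = v at hlt h
  induction v generalizing j with
  | zero => omega
  | succ v ih =>
    have hbot : IsDescentBottom p (v + 1) := not_not.mp fun hnot =>
      (blockIndex_lt_of_not_isDescentBottom hlt hnot).ne h
    have hv : blockIndex p (p i) = blockIndex p v := by
      have := blockIndex_mono p (Nat.le_of_lt_succ hlt)
      have := blockIndex_succ_of_isDescentBottom hbot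
      omega
    obtain ⟨k, hk⟩ := hp.1.exists_apply_eq (v := v) (by have := (hp.1.mem_Icc i).1; omega)
      (by have := (hp.1.mem_Icc j).2; omega)
    have hkj : k < j := hp.lt_of_isDescentBottom (hj ▸ hbot) (by rw [hk, hj])
    rcases eq_or_lt_of_le (Nat.le_of_lt_succ hlt) with hiv | hiv
    · rwa [← hp.1.1 (hk.trans hiv.symm)]
    · exact (ih hk hiv hv).trans hkj

lemma le_iff_of_blockIndex_eq (hp : InOmega p) {i j : Fin n}
    (h : blockIndex p (p i) = blockIndex p (p j)) : i ≤ j ↔ p i ≤ p j := by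
  rcases lt_trichotomy (p i) (p j) with hlt | heq | hgt
  · exact iff_of_true (hp.lt_of_blockIndex_eq hlt h).le hlt.le
  · exact iff_of_true (hp.1.1 heq).le heq.le
  · exact iff_of_false (hp.lt_of_blockIndex_eq hgt h.symm).not_ge hgt.not_ge

lemma mem_nub_iff (hp : InOmega p) (i : Fin n) :
    i ∈ Nub (blockIndex p ∘ p) ↔ ¬ IsDescentBottom p (p i) := by
  refine ⟨fun hnub hbot => ?_, fun hnot j hji hblk => ?_⟩
  · obtain ⟨hi0, hin⟩ := hp.1.mem_Icc i
    have hi1 : p i ≠ 1 := fun h => hp.not_isDescentBottom_one (h ▸ hbot)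
    obtain ⟨k, hk⟩ := hp.1.exists_apply_eq (v := p i - 1) (by omega) (by omega)
    have hki : p k + 1 = p i := by omega
    refine hnub k (hp.lt_of_isDescentBottom hbot hki) ?_
    simp only [Function.comp_apply, ← hki]
    exact (blockIndex_succ_of_isDescentBottom (by rwa [hki])).symm
  · rcases lt_or_gt_of_ne (hp.1.1.ne hji.ne) with hlt | hgt
    · exact (blockIndex_lt_of_not_isDescentBottom hlt hnot).ne hblk
    · exact (hp.lt_of_blockIndex_eq hgt hblk.symm).not_gt hji

lemma isCayley (hp : InOmega p) : IsCayley (blockIndex p ∘ p) := by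
  refine ⟨blockIndex p n, blockIndex_le p n, Set.eq_of_subset_of_subset ?_ fun m hm => ?_⟩
  · rintro _ ⟨i, rfl⟩
    have hi := hp.1.mem_Icc i
    exact ⟨hp.blockIndex_one ▸ blockIndex_mono p hi.1, blockIndex_mono p hi.2⟩
  · obtain ⟨v, hvn, hv⟩ := exists_le_apply_eq_of_le_succ (blockIndex_succ_le p)
      (by rw [blockIndex_zero]; exact Nat.zero_le m) hm.2
    have hv1 : 1 ≤ v := Nat.pos_of_ne_zero fun h0 => by
      rw [h0, blockIndex_zero] at hv; exact absurd hm.1 (by omega)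
    obtain ⟨i, rfl⟩ := hp.1.exists_apply_eq hv1 hvn
    exact ⟨i, hv⟩

lemma ascTops_eq_nub (hp : InOmega p) : AscTops (blockIndex p ∘ p) = Nub (blockIndex p ∘ p) :=
  Set.ext fun i => (mem_ascTops_iff hp.1.1 i).trans (hp.mem_nub_iff i).symm

lemma noFlat (hp : InOmega p) : NoFlat (blockIndex p ∘ p) := by
  intro i j hij heq
  have hne : p i ≠ p j := fun h => by have := congrArg Fin.val (hp.1.1 h); omega
  rcases lt_or_gt_of_ne hne with hlt | hgt
  · exact ((blockIndex_lt_blockIndex_iff_of_succ hp.1.1 hij.symm).mpr hlt).ne heq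
  · exact (hp.lt_of_blockIndex_eq hgt heq.symm).not_gt (Fin.lt_def.mpr (by omega))

lemma std_blockIndex_comp (hp : InOmega p) : Std (blockIndex p ∘ p) = p := by
  refine hp.1.std_eq fun i j => ?_
  simp only [Function.comp_apply]
  constructor
  · intro hle
    rcases (blockIndex_mono p hle).lt_or_eq with h | h
    · exact Or.inl h
    · exact Or.inr ⟨(hp.le_iff_of_blockIndex_eq h).mpr hle, h⟩
  · rintro (h | ⟨hji, h⟩)
    · exact ((blockIndex_mono p).reflect_lt h).le
    · exact (hp.le_iff_of_blockIndex_eq h).mp hji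

end InOmega

/-- Every `p ∈ Ω_n` is the standardization of some primitive modified
ascent sequence of length `n`. -/
theorem omega_subset_std_prim {n : ℕ} (p : Fin n → ℕ) (hp : InOmega p) :
    ∃ x : Fin n → ℕ, IsPrim x ∧ Std x = p :=
  ⟨blockIndex p ∘ p, ⟨⟨hp.isCayley, hp.ascTops_eq_nub⟩, hp.noFlat⟩, hp.std_blockIndex_comp⟩
end

section
/- For every n ≥ 1, the number of modified ascent sequences of length n that avoid the pattern 122 equals Σ_{k=1}^n k^{n-k}. -/
/-!
A word is a modified ascent sequence avoiding `122` iff it is Cayley, starts with `1`, its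
entries other than `1` are pairwise distinct, and each of them exceeds its predecessor. Such a
word with `m` ones is `1 w₁ 1 w₂ ⋯ 1 wₘ` with increasing words `wᵦ` whose letters partition
`{2, …, n - m + 1}`, so it is the same thing as a map `Fin (n - m) → Fin m` sending each letter
to its block. Concretely, give position `i` the key `(number of ones up to i, x i)`: on such
words the keys increase lexicographically, so the word is read off the sorted set of keys, and
these sets are exactly the sets `{(b, 1) : 1 ≤ b ≤ m} ∪ {(f v + 1, v + 2) : v < n - m}`
for `f : Fin (n - m) → Fin m`.
-/

open Finset

theorem Finset.card_filter_orderEmbOfFin {α : Type*} [LinearOrder α] {n : ℕ} (s : Finset α)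
    (h : #s = n) (p : α → Prop) [DecidablePred p] :
    #{i | p (s.orderEmbOfFin h i)} = #{a ∈ s | p a} := by
  calc #{i | p (s.orderEmbOfFin h i)}
      = #(({i | p (s.orderEmbOfFin h i)} : Finset (Fin n)).map (s.orderEmbOfFin h).toEmbedding) :=
        (card_map _).symm
    _ = #((univ.map (s.orderEmbOfFin h).toEmbedding).filter p) := by rw [filter_map]; rfl
    _ = #{a ∈ s | p a} := by rw [map_orderEmbOfFin_univ]

theorem Fin.strictMono_of_lt_of_val_add_one_eq {α : Type*} [Preorder α] {n : ℕ} {f : Fin n → α}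
    (h : ∀ i j : Fin n, (j : ℕ) + 1 = i → f j < f i) : StrictMono f := by
  cases n with
  | zero => exact fun i => i.elim0
  | succ n => exact Fin.strictMono_iff_lt_succ.2 fun i => h _ _ (by simp)

section Words

variable {n : ℕ} {x : Fin n → ℕ}

theorem IsCayley.one_le (hx : IsCayley x) (i : Fin n) : 1 ≤ x i := by
  obtain ⟨k, -, hk⟩ := hx
  exact (hk.subset (Set.mem_range_self i)).1

theorem IsCayley.exists_eq_one (hx : IsCayley x) (i : Fin n) : ∃ p, x p = 1 := by
  obtain ⟨k, -, hk⟩ := hx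
  have hi := hk.subset (Set.mem_range_self i)
  exact hk.symm.subset ⟨le_rfl, hi.1.trans hi.2⟩

theorem IsModasc.eq_one_of_val_eq_zero (hx : IsModasc x) {i : Fin n} (hi : (i : ℕ) = 0) :
    x i = 1 := by
  obtain ⟨p, hp : x p = 1, hmin⟩ :=
    wellFounded_lt.has_min {p | x p = 1} (IsCayley.exists_eq_one hx.1 i)
  have hasc : p ∈ AscTops x := hx.2 ▸ fun j hj => hp ▸ fun h => hmin j h hj
  have hp0 : (p : ℕ) = 0 := by
    by_contra hne
    have := hasc ⟨p - 1, by omega⟩ (by dsimp only; omega)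
    have := IsCayley.one_le hx.1 ⟨p - 1, by omega⟩
    omega
  rwa [Fin.ext (hi.trans hp0.symm)]

theorem contains_122_iff :
    Contains x ![1, 2, 2] ↔ ∃ i j l, i < j ∧ j < l ∧ x i < x j ∧ x j = x l := by
  constructor
  · rintro ⟨f, hf, hpat⟩
    refine ⟨f 0, f 1, f 2, hf (by decide), hf (by decide), (hpat 0 1).1 (by decide), ?_⟩
    have h12 := (hpat 1 2).not.1 (by decide)
    have h21 := (hpat 2 1).not.1 (by decide)
    omega
  · rintro ⟨i, j, l, hij, hjl, hlt, heq⟩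
    refine ⟨![i, j, l], Fin.strictMono_iff_lt_succ.2 fun s => ?_, fun s t => ?_⟩
    · fin_cases s <;> simpa
    · fin_cases s <;> fin_cases t <;> simp <;> omega

end Words

namespace Modasc122

variable {n : ℕ}

structure IsBlockWord (x : Fin n → ℕ) : Prop where
  isCayley : IsCayley x
  eq_one_of_val_eq_zero : ∀ i : Fin n, (i : ℕ) = 0 → x i = 1
  injOn : Set.InjOn x {i | x i ≠ 1}
  lt_of_succ_eq : ∀ i j : Fin n, (j : ℕ) + 1 = i → x i ≠ 1 → x j < x i

variable {x : Fin n → ℕ}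

theorem isBlockWord_of_isModasc (hx : IsModasc x) (hav : Avoids x ![1, 2, 2]) :
    IsBlockWord x := by
  have h0 := fun i => IsModasc.eq_one_of_val_eq_zero hx (i := i)
  have h122 : ∀ i j, i < j → x i = x j → x i = 1 := by
    intro i j hlt hij
    by_contra hi
    have hi0 : (i : ℕ) ≠ 0 := fun h => hi (h0 i h)
    refine hav (contains_122_iff.2 ⟨⟨0, by omega⟩, i, j, Fin.lt_def.2 (by dsimp only; omega), hlt, ?_, hij⟩)
    have := IsCayley.one_le hx.1 i
    rw [h0 _ rfl]
    omega
  have hinj : Set.InjOn x {i | x i ≠ 1} := fun i hi j _ hij => by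
    rcases lt_trichotomy i j with h | h | h
    · exact absurd (h122 i j h hij) hi
    · exact h
    · exact absurd (h122 j i h hij.symm) (hij ▸ hi)
  refine ⟨hx.1, h0, hinj, fun i j hji hi => ?_⟩
  have hnub : i ∈ Nub x := fun l hl heq => (ne_of_lt hl) (hinj (show x l ≠ 1 from heq ▸ hi) hi heq)
  exact (hx.2 ▸ hnub : i ∈ AscTops x) j hji

namespace IsBlockWord

theorem isModasc (hx : IsBlockWord x) : IsModasc x := by
  refine ⟨hx.isCayley, Set.ext fun i => ?_⟩
  by_cases hi : x i = 1
  · have hA : i ∈ AscTops x ↔ (i : ℕ) = 0 := by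
      refine ⟨fun h => by_contra fun h0 => ?_, fun h j hj => by omega⟩
      have := h ⟨i - 1, by omega⟩ (by dsimp only; omega)
      have := IsCayley.one_le hx.isCayley ⟨i - 1, by omega⟩
      omega
    have hN : i ∈ Nub x ↔ (i : ℕ) = 0 := by
      refine ⟨fun h => by_contra fun h0 => ?_, fun h j hj => absurd hj (by simp [Fin.lt_def, h])⟩
      exact h ⟨0, by omega⟩ (Fin.lt_def.2 (by dsimp only; omega))
        (by rw [hi, hx.eq_one_of_val_eq_zero _ rfl])
    exact hA.trans hN.symm
  · exact iff_of_true (fun j hji => hx.lt_of_succ_eq i j hji hi)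
      fun j hj heq => (ne_of_lt hj) (hx.injOn (show x j ≠ 1 from heq ▸ hi) hi heq)

theorem avoids_122 (hx : IsBlockWord x) : Avoids x ![1, 2, 2] := fun hc => by
  obtain ⟨i, j, l, -, hjl, hlt, heq⟩ := contains_122_iff.1 hc
  have hj : x j ≠ 1 := by have := IsCayley.one_le hx.isCayley i; omega
  exact (ne_of_lt hjl) (hx.injOn hj (show x l ≠ 1 from heq ▸ hj) heq)

end IsBlockWord

theorem isModasc_and_avoids_iff : IsModasc x ∧ Avoids x ![1, 2, 2] ↔ IsBlockWord x :=
  ⟨fun h => isBlockWord_of_isModasc h.1 h.2, fun hx => ⟨hx.isModasc, hx.avoids_122⟩⟩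

def ones (x : Fin n → ℕ) : ℕ := #{i | x i = 1}

/-- In a block word, the index of the block containing position `i`. -/
def onesUpTo (x : Fin n → ℕ) (i : Fin n) : ℕ := #{j | j ≤ i ∧ x j = 1}

def key (x : Fin n → ℕ) (i : Fin n) : ℕ ×ₗ ℕ := toLex (onesUpTo x i, x i)

theorem onesUpTo_le_ones (i : Fin n) : onesUpTo x i ≤ ones x :=
  card_le_card fun j hj => by simp only [mem_filter, mem_univ, true_and] at hj ⊢; exact hj.2

theorem onesUpTo_of_val_add_one_eq {i j : Fin n} (hji : (j : ℕ) + 1 = i) :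
    onesUpTo x i = onesUpTo x j + if x i = 1 then 1 else 0 := by
  have hle : ∀ l : Fin n, l ≤ i ↔ l ≤ j ∨ l = i := fun l => by
    simp only [Fin.le_def, Fin.ext_iff]; omega
  have hij : ¬ i ≤ j := by simp only [Fin.le_def]; omega
  unfold onesUpTo
  split_ifs with hi
  · have hi' : i ∉ ({l | l ≤ j ∧ x l = 1} : Finset (Fin n)) := by simp [hij]
    rw [← card_insert_of_notMem hi']
    congr 1
    ext l
    simp only [mem_filter, mem_univ, true_and, mem_insert, hle]
    grind
  · rw [add_zero]
    congr 1
    ext l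
    simp only [mem_filter, mem_univ, true_and, hle]
    grind

theorem strictMono_key_iff :
    StrictMono (key x) ↔ ∀ i j : Fin n, (j : ℕ) + 1 = i → x i ≠ 1 → x j < x i := by
  constructor
  · intro h i j hji hi
    have := h (Fin.lt_def.2 (by omega) : j < i)
    simp only [key, onesUpTo_of_val_add_one_eq hji, if_neg hi, Prod.Lex.toLex_lt_toLex] at this
    omega
  · intro h
    refine Fin.strictMono_of_lt_of_val_add_one_eq fun i j hji => ?_
    simp only [key, onesUpTo_of_val_add_one_eq hji, Prod.Lex.toLex_lt_toLex]
    by_cases hi : x i = 1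
    · simp [hi]
    · simp [hi, h i j hji hi]

namespace IsBlockWord

theorem strictMono_key (hx : IsBlockWord x) : StrictMono (key x) :=
  strictMono_key_iff.2 hx.lt_of_succ_eq

theorem one_le_onesUpTo (hx : IsBlockWord x) (i : Fin n) : 1 ≤ onesUpTo x i :=
  card_pos.2 ⟨⟨0, by have := i.isLt; omega⟩,
    mem_filter.2 ⟨mem_univ _, Fin.le_def.2 (Nat.zero_le _), hx.eq_one_of_val_eq_zero _ rfl⟩⟩

theorem range_eq (hx : IsBlockWord x) (hm : 1 ≤ ones x) :
    Set.range x = Set.Icc 1 (n - ones x + 1) := by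
  obtain ⟨K, -, hK⟩ := hx.isCayley
  have hlarge : ({i | x i ≠ 1} : Finset (Fin n)).image x = Icc 2 K := by
    ext v
    have := Set.ext_iff.1 hK v
    simp only [Set.mem_range, Set.mem_Icc] at this
    simp only [mem_image, mem_filter, mem_univ, true_and, mem_Icc]
    constructor
    · rintro ⟨i, hi, rfl⟩
      have := this.1 ⟨i, rfl⟩
      omega
    · rintro ⟨hv2, hvK⟩
      obtain ⟨i, rfl⟩ := this.2 ⟨by omega, hvK⟩
      exact ⟨i, by omega, rfl⟩
  have hcard := card_image_of_injOn (s := {i | x i ≠ 1}) fun i hi j hj hij =>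
    hx.injOn (by simpa using hi) (by simpa using hj) hij
  have hsplit := card_filter_add_card_filter_not (s := (univ : Finset (Fin n))) (fun i => x i = 1)
  obtain ⟨p, hp⟩ : ∃ p, x p = 1 := by
    obtain ⟨p, hp⟩ := card_pos.1 hm
    exact ⟨p, by simpa using hp⟩
  have hK1 : 1 ≤ K := (Set.ext_iff.1 hK 1).1 ⟨p, hp⟩ |>.2
  rw [hlarge, Nat.card_Icc] at hcard
  simp only [ne_eq] at hcard
  rw [card_univ, Fintype.card_fin] at hsplit
  rw [hK, ones]
  congr 1
  omega

end IsBlockWord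

section Keys

variable {m k : ℕ} (f : Fin k → Fin m)

def keys : Finset (ℕ ×ₗ ℕ) :=
  (Icc 1 m).image (fun a => toLex (a, 1)) ∪ univ.image fun v => toLex ((f v : ℕ) + 1, (v : ℕ) + 2)

variable {f} in
theorem mem_keys {s : ℕ ×ₗ ℕ} :
    s ∈ keys f ↔ (∃ a, (1 ≤ a ∧ a ≤ m) ∧ toLex (a, 1) = s) ∨
      ∃ v, toLex ((f v : ℕ) + 1, (v : ℕ) + 2) = s := by
  simp [keys]

theorem card_keys : #(keys f) = m + k := by
  rw [keys, card_union_of_disjoint, card_image_of_injective, card_image_of_injective, Nat.card_Icc,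
    card_univ, Fintype.card_fin, Nat.add_sub_cancel]
  · intro v w h
    simp only [toLex_inj, Prod.mk.injEq, add_left_inj] at h
    exact Fin.ext h.2
  · intro a b h
    simpa using h
  · refine disjoint_left.2 fun _ ha hv => ?_
    obtain ⟨a, -, rfl⟩ := mem_image.1 ha
    obtain ⟨v, -, hv⟩ := mem_image.1 hv
    simp at hv

theorem filter_keys_snd_eq_one :
    {s ∈ keys f | (ofLex s).2 = 1} = (Icc 1 m).image (fun a => toLex (a, 1)) := by
  ext s
  simp only [mem_filter, mem_keys, mem_image, mem_Icc]
  constructor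
  · rintro ⟨⟨a, ha, rfl⟩ | ⟨v, rfl⟩, h1⟩
    · exact ⟨a, ha, rfl⟩
    · simp at h1
  · rintro ⟨a, ha, rfl⟩
    exact ⟨Or.inl ⟨a, ha, rfl⟩, rfl⟩

theorem bounds_of_mem_keys {s : ℕ ×ₗ ℕ} (hs : s ∈ keys f) :
    (1 ≤ (ofLex s).1 ∧ (ofLex s).1 ≤ m) ∧ 1 ≤ (ofLex s).2 := by
  rcases mem_keys.1 hs with ⟨a, ha, rfl⟩ | ⟨v, rfl⟩
  · simpa using ha
  · simp only [ofLex_toLex]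
    omega

theorem card_filter_keys_le {t : ℕ ×ₗ ℕ} (ht : t ∈ keys f) :
    #{s ∈ keys f | s ≤ t ∧ (ofLex s).2 = 1} = (ofLex t).1 := by
  obtain ⟨⟨-, htm⟩, ht1⟩ := bounds_of_mem_keys f ht
  have : {s ∈ keys f | s ≤ t ∧ (ofLex s).2 = 1} =
      (Icc 1 (ofLex t).1).image (fun a => toLex (a, 1)) := by
    rw [← filter_filter, filter_comm, filter_keys_snd_eq_one, filter_image]
    congr 1
    ext a
    simp only [mem_filter, mem_Icc, Prod.Lex.le_iff, ofLex_toLex]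
    omega
  rw [this, card_image_of_injective _ fun a b h => by simpa using h, Nat.card_Icc,
    Nat.add_sub_cancel]

theorem keys_injective : Function.Injective (keys : (Fin k → Fin m) → Finset (ℕ ×ₗ ℕ)) := by
  intro f g hfg
  funext v
  have hv : toLex ((f v : ℕ) + 1, (v : ℕ) + 2) ∈ keys g := hfg ▸ mem_keys.2 (Or.inr ⟨v, rfl⟩)
  rcases mem_keys.1 hv with ⟨a, -, ha⟩ | ⟨w, hw⟩
  · simp at ha
  · simp only [toLex_inj, Prod.mk.injEq, add_left_inj] at hw
    rw [Fin.ext hw.2] at hw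
    exact Fin.ext hw.1.symm

variable (h : m + k = n)

def sortedKeys : Fin n ↪o ℕ ×ₗ ℕ := (keys f).orderEmbOfFin ((card_keys f).trans h)

def ofBlocks (i : Fin n) : ℕ := (ofLex (sortedKeys f h i)).2

theorem sortedKeys_mem (i : Fin n) : sortedKeys f h i ∈ keys f := orderEmbOfFin_mem _ _ i

theorem range_sortedKeys : Set.range (sortedKeys f h) = keys f := range_orderEmbOfFin _ _

theorem exists_sortedKeys_eq {t : ℕ ×ₗ ℕ} (ht : t ∈ keys f) : ∃ i, sortedKeys f h i = t := by
  rwa [← mem_coe, ← range_sortedKeys f h] at ht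

theorem exists_sortedKeys_eq_of_ofBlocks_ne_one {i : Fin n} (hi : ofBlocks f h i ≠ 1) :
    ∃ v, sortedKeys f h i = toLex ((f v : ℕ) + 1, (v : ℕ) + 2) := by
  rcases mem_keys.1 (sortedKeys_mem f h i) with ⟨a, -, ha⟩ | ⟨v, hv⟩
  · simp [ofBlocks, ← ha] at hi
  · exact ⟨v, hv.symm⟩

theorem onesUpTo_ofBlocks (i : Fin n) :
    onesUpTo (ofBlocks f h) i = (ofLex (sortedKeys f h i)).1 := by
  rw [onesUpTo, ← card_filter_keys_le f (sortedKeys_mem f h i)]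
  simp_rw [← (sortedKeys f h).le_iff_le]
  exact card_filter_orderEmbOfFin (keys f) _ (fun s => s ≤ sortedKeys f h i ∧ (ofLex s).2 = 1)

theorem key_ofBlocks : key (ofBlocks f h) = sortedKeys f h := by
  funext i
  simp [key, onesUpTo_ofBlocks, ofBlocks]

theorem ones_ofBlocks : ones (ofBlocks f h) = m := by
  unfold ones ofBlocks sortedKeys
  rw [card_filter_orderEmbOfFin (keys f) _ (fun s => (ofLex s).2 = 1), filter_keys_snd_eq_one,
    card_image_of_injective _ fun a b h => by simpa using h, Nat.card_Icc, Nat.add_sub_cancel]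

theorem range_ofBlocks (hm : 1 ≤ m) : Set.range (ofBlocks f h) = Set.Icc 1 (k + 1) := by
  ext v
  constructor
  · rintro ⟨i, rfl⟩
    rcases mem_keys.1 (sortedKeys_mem f h i) with ⟨a, -, ha⟩ | ⟨w, hw⟩
    · simp [ofBlocks, ← ha]
    · simp only [ofBlocks, ← hw, ofLex_toLex, Set.mem_Icc]
      omega
  · rintro ⟨hv1, hvk⟩
    obtain ⟨t, ht, htv⟩ : ∃ t ∈ keys f, (ofLex t).2 = v := by
      rcases eq_or_lt_of_le hv1 with rfl | hv
      · exact ⟨toLex (1, 1), mem_keys.2 (Or.inl ⟨1, ⟨le_rfl, hm⟩, rfl⟩), rfl⟩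
      · exact ⟨_, mem_keys.2 (Or.inr ⟨⟨v - 2, by omega⟩, rfl⟩), by simp only [ofLex_toLex]; omega⟩
    obtain ⟨i, rfl⟩ := exists_sortedKeys_eq f h ht
    exact ⟨i, htv⟩

theorem isBlockWord_ofBlocks (hm : 1 ≤ m) : IsBlockWord (ofBlocks f h) where
  isCayley := ⟨k + 1, by omega, range_ofBlocks f h hm⟩
  eq_one_of_val_eq_zero i hi := by
    have hpos := (bounds_of_mem_keys f (sortedKeys_mem f h i)).1.1
    rw [← onesUpTo_ofBlocks, onesUpTo, Nat.one_le_iff_ne_zero, card_ne_zero] at hpos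
    obtain ⟨j, hj⟩ := hpos
    simp only [mem_filter, mem_univ, true_and] at hj
    have hji : j = i := Fin.ext (by have := Fin.le_def.1 hj.1; omega)
    exact hji ▸ hj.2
  injOn i hi j hj hij := by
    obtain ⟨v, hv⟩ := exists_sortedKeys_eq_of_ofBlocks_ne_one f h hi
    obtain ⟨w, hw⟩ := exists_sortedKeys_eq_of_ofBlocks_ne_one f h hj
    have hvw : v = w := by
      simp only [ofBlocks, hv, hw, ofLex_toLex] at hij
      exact Fin.ext (by omega)
    exact (sortedKeys f h).injective (by rw [hv, hw, hvw])
  lt_of_succ_eq := strictMono_key_iff.1 (key_ofBlocks f h ▸ (sortedKeys f h).strictMono)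

theorem ofBlocks_injective : Function.Injective fun f : Fin k → Fin m => ofBlocks f h := by
  intro f g hfg
  have hkey : ⇑(sortedKeys f h) = sortedKeys g h := by
    rw [← key_ofBlocks, ← key_ofBlocks]
    exact congrArg key hfg
  apply keys_injective
  rw [← coe_inj, ← range_sortedKeys f h, ← range_sortedKeys g h, hkey]

end Keys

theorem exists_ofBlocks_eq {m k : ℕ} (hx : IsBlockWord x) (hm : 1 ≤ m) (hones : ones x = m)
    (h : m + k = n) : ∃ f : Fin k → Fin m, ofBlocks f h = x := by
  have hrange := hx.range_eq (hones ▸ hm)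
  rw [hones, show n - m = k by omega] at hrange
  have hval : ∀ v : Fin k, ∃ i, x i = v + 2 := fun v =>
    hrange.symm.subset ⟨by omega, by omega⟩
  choose p hp using hval
  have hblock : ∀ i, 1 ≤ onesUpTo x i ∧ onesUpTo x i ≤ m := fun i =>
    ⟨hx.one_le_onesUpTo i, hones ▸ onesUpTo_le_ones i⟩
  let f : Fin k → Fin m := fun v => ⟨onesUpTo x (p v) - 1, by have := hblock (p v); omega⟩
  have hkeys : ∀ i, key x i ∈ keys f := by
    intro i
    rw [mem_keys]
    by_cases hi : x i = 1
    · exact Or.inl ⟨onesUpTo x i, hblock i, by rw [key, hi]⟩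
    · obtain ⟨hxi1, hxik⟩ : x i ∈ Set.Icc 1 (k + 1) := hrange.subset ⟨i, rfl⟩
      let v : Fin k := ⟨x i - 2, by omega⟩
      have hpv : p v = i := hx.injOn (by simp [hp v]) hi (by rw [hp v]; simp only [v]; omega)
      refine Or.inr ⟨v, ?_⟩
      have := hblock i
      simp only [key, f, hpv, v]
      congr 2 <;> omega
  have hsorted := orderEmbOfFin_unique ((card_keys f).trans h) hkeys hx.strictMono_key
  refine ⟨f, funext fun i => ?_⟩
  simp only [ofBlocks, sortedKeys, ← hsorted, key, ofLex_toLex]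

noncomputable def blockWordEquiv {m k : ℕ} (hm : 1 ≤ m) (h : m + k = n) :
    (Fin k → Fin m) ≃ {x : Fin n → ℕ // IsBlockWord x ∧ ones x = m} :=
  Equiv.ofBijective (fun f => ⟨ofBlocks f h, isBlockWord_ofBlocks f h hm, ones_ofBlocks f h⟩)
    ⟨fun _ _ hfg => ofBlocks_injective h (congrArg Subtype.val hfg),
      fun ⟨_, hx, hones⟩ => (exists_ofBlocks_eq hx hm hones h).imp fun _ hf => Subtype.ext hf⟩

theorem card_isBlockWord (hn : 1 ≤ n) :
    Nat.card {x : Fin n → ℕ // IsBlockWord x} = ∑ m ∈ Icc 1 n, m ^ (n - m) := by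
  have hones : ∀ x : {x : Fin n → ℕ // IsBlockWord x}, ones x.1 ∈ Icc 1 n := fun x =>
    mem_Icc.2 ⟨(x.2.one_le_onesUpTo ⟨0, hn⟩).trans (onesUpTo_le_ones _),
      card_le_univ _ |>.trans (by simp)⟩
  let fiber (m : Icc 1 n) : {x : {x // IsBlockWord x} // ⟨ones x.1, hones x⟩ = m} ≃
      {x : Fin n → ℕ // IsBlockWord x ∧ ones x = m} :=
    (Equiv.subtypeEquivRight fun _ => Subtype.ext_iff).trans
      (Equiv.subtypeSubtypeEquivSubtypeInter IsBlockWord (ones · = m))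
  let e : {x : Fin n → ℕ // IsBlockWord x} ≃ Σ m : Icc 1 n, (Fin (n - m) → Fin m) :=
    (Equiv.sigmaFiberEquiv fun x => (⟨ones x.1, hones x⟩ : Icc 1 n)).symm.trans
      (Equiv.sigmaCongrRight fun m => (fiber m).trans
        (blockWordEquiv (mem_Icc.1 m.2).1 (by have := mem_Icc.1 m.2; omega)).symm)
  rw [Nat.card_congr e, Nat.card_eq_fintype_card, Fintype.card_sigma, ← sum_coe_sort (Icc 1 n)]
  simp

end Modasc122

open Modasc122 in
/-- `|Modasc_n(122)| = Σ_{k=1}^n k^{n-k}` for `n ≥ 1`. -/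
theorem count_122 (n : ℕ) (hn : 1 ≤ n) :
    Nat.card {x : Fin n → ℕ // IsModasc x ∧ Avoids x ![1, 2, 2]} =
      ∑ k ∈ Finset.Icc 1 n, k ^ (n - k) := by
  rw [← card_isBlockWord hn]
  exact Nat.card_congr (Equiv.subtypeEquivRight fun _ => isModasc_and_avoids_iff)
end

section
/- For every n ≥ 0, a primitive modified ascent sequence of length n avoids the pattern 122 if and only if it avoids the pattern 1232; that is, Prim_n(122) = Prim_n(1232). -/
/-!
An occurrence of `1232` contains one of `122`, so avoiding `122` implies avoiding `1232`.
Conversely, in an occurrence `x a < x b = x c` of `122` in a primitive modified ascent sequence,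
`c` is not a leftmost copy, hence not an ascent top, and since there are no flat steps the entry
just before `c` is larger than `x c`. Inserting it between `b` and `c` gives an occurrence of `1232`.
-/

theorem Contains.trans {n m k : ℕ} {x : Fin n → ℕ} {y : Fin m → ℕ} {z : Fin k → ℕ}
    (hxy : Contains x y) (hyz : Contains y z) : Contains x z := by
  obtain ⟨f, hf, hxf⟩ := hxy
  obtain ⟨g, hg, hyg⟩ := hyz
  exact ⟨f ∘ g, hf.comp hg, fun s t => (hyg s t).trans (hxf (g s) (g t))⟩

theorem contains_122_iff_s10 {n : ℕ} (x : Fin n → ℕ) :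
    Contains x ![1, 2, 2] ↔ ∃ a b c : Fin n, a < b ∧ b < c ∧ x a < x b ∧ x b = x c := by
  constructor
  · rintro ⟨f, hf, hxf⟩
    have h12 : ¬ x (f 1) < x (f 2) := by simpa using hxf 1 2
    have h21 : ¬ x (f 2) < x (f 1) := by simpa using hxf 2 1
    exact ⟨f 0, f 1, f 2, hf (by decide), hf (by decide), (hxf 0 1).1 (by simp), by omega⟩
  · rintro ⟨a, b, c, hab, hbc, hxab, hxbc⟩
    refine ⟨![a, b, c], Fin.strictMono_iff_lt_succ.2 fun i => ?_, fun s t => ?_⟩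
    · fin_cases i <;> assumption
    · fin_cases s <;> fin_cases t <;> simp <;> omega

theorem contains_1232_of_lt {n : ℕ} {x : Fin n → ℕ} {a b c d : Fin n}
    (hab : a < b) (hbc : b < c) (hcd : c < d)
    (hxab : x a < x b) (hxbc : x b < x c) (hxdb : x d = x b) :
    Contains x ![1, 2, 3, 2] := by
  refine ⟨![a, b, c, d], Fin.strictMono_iff_lt_succ.2 fun i => ?_, fun s t => ?_⟩
  · fin_cases i <;> assumption
  · fin_cases s <;> fin_cases t <;> simp <;> omega

theorem contains_1232_122 : Contains ![1, 2, 3, 2] ![1, 2, 2] :=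
  (contains_122_iff_s10 _).2 ⟨0, 1, 3, by decide⟩

theorem exists_between_gt_of_eq {n : ℕ} {x : Fin n → ℕ} (hasc : AscTops x ⊆ Nub x)
    (hflat : NoFlat x) {b c : Fin n} (hbc : b < c) (hx : x b = x c) :
    ∃ j, b < j ∧ j < c ∧ x c < x j := by
  have hc : ¬ ∀ j : Fin n, (j : ℕ) + 1 = c → x j < x c := fun h => hasc h b hbc hx
  push Not at hc
  obtain ⟨j, hjc, hxcj⟩ := hc
  have hxcj : x c < x j := lt_of_le_of_ne hxcj (hflat j c hjc.symm).symm
  have hbj : b ≠ j := by rintro rfl; omega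
  rw [Fin.lt_def] at hbc
  exact ⟨j, Fin.lt_def.2 (by have := Fin.val_ne_of_ne hbj; omega), Fin.lt_def.2 (by omega), hxcj⟩

/-- `Prim_n(122) = Prim_n(1232)` for every `n ≥ 0`. -/
theorem prim_122_eq_1232 (n : ℕ) :
    {x : Fin n → ℕ | IsPrim x ∧ Avoids x ![1, 2, 2]} =
      {x : Fin n → ℕ | IsPrim x ∧ Avoids x ![1, 2, 3, 2]} := by
  refine Set.ext fun x => and_congr_right fun ⟨⟨_, hasc⟩, hflat⟩ =>
    ⟨fun h122 h1232 => h122 (h1232.trans contains_1232_122), fun h1232 h122 => ?_⟩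
  obtain ⟨a, b, c, hab, hbc, hxab, hxbc⟩ := (contains_122_iff_s10 x).1 h122
  obtain ⟨j, hbj, hjc, hxcj⟩ := exists_between_gt_of_eq hasc.subset hflat hbc hxbc
  exact h1232 (contains_1232_of_lt hab hbj hjc hxab (hxbc ▸ hxcj) hxbc.symm)
end

section
/- Every primitive modified ascent sequence that avoids the pattern 213 also avoids the pattern 212, and every primitive modified ascent sequence that avoids the pattern 231 also avoids the pattern 221; that is, Prim(212,213) = Prim(213) and Prim(221,231) = Prim(231). -/
section Patterns

variable {n : ℕ} (x : Fin n → ℕ)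

theorem contains_fin_three_iff (y : Fin 3 → ℕ) :
    Contains x y ↔ ∃ i j k : Fin n, i < j ∧ j < k ∧
      ∀ s t, y s < y t ↔ x (![i, j, k] s) < x (![i, j, k] t) := by
  constructor
  · rintro ⟨f, hf, hy⟩
    have hf_eq : ![f 0, f 1, f 2] = f := by
      funext s; fin_cases s <;> rfl
    exact ⟨f 0, f 1, f 2, hf (by decide), hf (by decide), hf_eq ▸ hy⟩
  · rintro ⟨i, j, k, hij, hjk, hy⟩
    refine ⟨![i, j, k], Fin.strictMono_iff_lt_succ.2 fun s => ?_, hy⟩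
    fin_cases s
    exacts [hij, hjk]

theorem contains_vecCons_three_iff (a b c : ℕ) :
    Contains x ![a, b, c] ↔ ∃ i j k : Fin n, i < j ∧ j < k ∧
      (a < b ↔ x i < x j) ∧ (a < c ↔ x i < x k) ∧ (b < a ↔ x j < x i) ∧
      (b < c ↔ x j < x k) ∧ (c < a ↔ x k < x i) ∧ (c < b ↔ x k < x j) := by
  simp only [contains_fin_three_iff, Fin.forall_fin_succ, IsEmpty.forall_iff, and_true,
    true_and, and_assoc, Fin.succ_zero_eq_one, Fin.succ_one_eq_two, Matrix.cons_val_zero,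
    Matrix.cons_val_one, Matrix.cons_val_two, Matrix.tail_cons, Matrix.head_cons,
    lt_self_iff_false]

theorem contains_212_iff :
    Contains x ![2, 1, 2] ↔ ∃ i j k : Fin n, i < j ∧ j < k ∧ x j < x i ∧ x i = x k := by
  rw [contains_vecCons_three_iff]
  refine exists₃_congr fun i j k => and_congr_right' <| and_congr_right' ?_
  omega

theorem contains_213_iff :
    Contains x ![2, 1, 3] ↔ ∃ i j k : Fin n, i < j ∧ j < k ∧ x j < x i ∧ x i < x k := by
  rw [contains_vecCons_three_iff]
  refine exists₃_congr fun i j k => and_congr_right' <| and_congr_right' ?_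
  omega

theorem contains_221_iff :
    Contains x ![2, 2, 1] ↔ ∃ i j k : Fin n, i < j ∧ j < k ∧ x i = x j ∧ x k < x i := by
  rw [contains_vecCons_three_iff]
  refine exists₃_congr fun i j k => and_congr_right' <| and_congr_right' ?_
  omega

theorem contains_231_iff :
    Contains x ![2, 3, 1] ↔ ∃ i j k : Fin n, i < j ∧ j < k ∧ x i < x j ∧ x k < x i := by
  rw [contains_vecCons_three_iff]
  refine exists₃_congr fun i j k => and_congr_right' <| and_congr_right' ?_
  omega

end Patterns

namespace IsPrim

variable {n : ℕ} {x : Fin n → ℕ}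

theorem exists_pred_gt_of_not_mem_nub (hx : IsPrim x) {i : Fin n} (hi : i ∉ Nub x) :
    ∃ j : Fin n, (j : ℕ) + 1 = i ∧ x i < x j := by
  rw [← hx.1.2] at hi
  simp only [AscTops, Set.mem_ofPred_eq, not_forall, not_lt] at hi
  obtain ⟨j, hji, hle⟩ := hi
  exact ⟨j, hji, lt_of_le_of_ne hle (hx.2 j i hji.symm).symm⟩

theorem avoids_212_of_avoids_213 (hx : IsPrim x) (h213 : Avoids x ![2, 1, 3]) :
    Avoids x ![2, 1, 2] := by
  intro hc
  obtain ⟨i, j, k, hij, hjk, hji, hik⟩ := (contains_212_iff x).1 hc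
  obtain ⟨m, hmk, hkm⟩ :=
    hx.exists_pred_gt_of_not_mem_nub fun hk => hk i (hij.trans hjk) hik
  have hjm : j < m := lt_of_le_of_ne (Fin.le_def.2 (by omega)) (by rintro rfl; omega)
  exact h213 ((contains_213_iff x).2 ⟨i, j, m, hij, hjm, hji, by omega⟩)

theorem avoids_221_of_avoids_231 (hx : IsPrim x) (h231 : Avoids x ![2, 3, 1]) :
    Avoids x ![2, 2, 1] := by
  intro hc
  obtain ⟨i, j, k, hij, hjk, hij', hki⟩ := (contains_221_iff x).1 hc
  obtain ⟨m, hmj, hjm⟩ := hx.exists_pred_gt_of_not_mem_nub fun hj => hj i hij hij'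
  have him : i < m := lt_of_le_of_ne (Fin.le_def.2 (by omega)) (by rintro rfl; omega)
  have hmk : m < k := Fin.lt_def.2 (by omega)
  exact h231 ((contains_231_iff x).2 ⟨i, m, k, him, hmk, by omega, hki⟩)

end IsPrim

/-- `Prim(212,213) = Prim(213)` and `Prim(221,231) = Prim(231)`. -/
theorem prim_213_231 (n : ℕ) :
    ({x : Fin n → ℕ | IsPrim x ∧ Avoids x ![2, 1, 2] ∧ Avoids x ![2, 1, 3]} =
      {x : Fin n → ℕ | IsPrim x ∧ Avoids x ![2, 1, 3]}) ∧
    ({x : Fin n → ℕ | IsPrim x ∧ Avoids x ![2, 2, 1] ∧ Avoids x ![2, 3, 1]} =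
      {x : Fin n → ℕ | IsPrim x ∧ Avoids x ![2, 3, 1]}) := by
  constructor <;> ext x <;> simp only [Set.mem_ofPred_eq]
  · exact ⟨fun ⟨hx, _, h213⟩ => ⟨hx, h213⟩,
      fun ⟨hx, h213⟩ => ⟨hx, hx.avoids_212_of_avoids_213 h213, h213⟩⟩
  · exact ⟨fun ⟨hx, _, h231⟩ => ⟨hx, h231⟩,
      fun ⟨hx, h231⟩ => ⟨hx, hx.avoids_221_of_avoids_231 h231, h231⟩⟩
end
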